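/- Let (Θ, 𝓕) be a measurable space, Q a probability measure on Θ, Θ₀ ⊆ Θ measurable, and β : Θ → ℝ measurable with 0 ≤ β(θ) ≤ 1 for all θ. Let C > 0, R > 0 and α ∈ (0, 1], and set the p-value threshold τ = α·C/R. If β(θ) ≤ τ for every θ ∈ Θ₀ and ∫_Θ β dQ ≥ C/R, then (∫_{Θ₀} β dQ) / (∫_Θ β dQ) ≤ α; that is, the principal guarantees Bayes FDR at most α by choosing τ = αC/R. -/

import Mathlib

open MeasureTheory

section

variable {Θ : Type*} [MeasurableSpace Θ] {μ : Measure Θ} [IsProbabilityMeasure μ]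
  {s : Set Θ} {f : Θ → ℝ}

lemma setIntegral_le_of_forall_le {c : ℝ} (hs : MeasurableSet s) (hf : IntegrableOn f s μ)
    (hc : 0 ≤ c) (h : ∀ x ∈ s, f x ≤ c) : ∫ x in s, f x ∂μ ≤ c :=
  calc ∫ x in s, f x ∂μ ≤ ∫ _ in s, c ∂μ := setIntegral_mono_on hf integrableOn_const hs h
    _ = μ.real s * c := by rw [setIntegral_const, smul_eq_mul]
    _ ≤ c := mul_le_of_le_one_left hc measureReal_le_one

/-- Theorem 1 of the paper, in Bayes FDR form. -/
lemma setIntegral_div_integral_le_div {τ k : ℝ} (hs : MeasurableSet s) (hτ : 0 ≤ τ)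
    (hvalid : ∀ x ∈ s, f x ≤ τ) (hk : 0 < k) (hmass : k ≤ ∫ x, f x ∂μ) :
    (∫ x in s, f x ∂μ) / (∫ x, f x ∂μ) ≤ τ / k := by
  have hf : Integrable f μ := .of_integral_ne_zero (hk.trans_le hmass).ne'
  exact div_le_div₀ hτ (setIntegral_le_of_forall_le hs hf.integrableOn hτ hvalid) hk hmass

end

theorem bayes_fdr_level_alpha_general
    {Θ : Type*} [MeasurableSpace Θ]
    (Q : Measure Θ) [IsProbabilityMeasure Q]
    (Θ₀ : Set Θ) (hΘ₀ : MeasurableSet Θ₀)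
    (β : Θ → ℝ)
    (C R α τ : ℝ) (hC : 0 < C) (hR : 0 < R)
    (hα0 : 0 < α)
    (hτdef : τ = α * C / R)
    (hvalid : ∀ θ ∈ Θ₀, β θ ≤ τ)
    (hparticipate : ∫ θ, β θ ∂Q ≥ C / R) :
    (∫ θ in Θ₀, β θ ∂Q) / (∫ θ, β θ ∂Q) ≤ α := by
  have hCR : 0 < C / R := div_pos hC hR
  subst hτdef
  have h := setIntegral_div_integral_le_div hΘ₀ (by positivity) hvalid hCR hparticipate
  rwa [mul_div_assoc, mul_div_cancel_right₀ _ hCR.ne'] at h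

/-- Corollary of Theorem 1: choosing τ = αC/R guarantees Bayes FDR at most α. -/
theorem bayes_fdr_level_alpha
    {Θ : Type*} [MeasurableSpace Θ]
    (Q : Measure Θ) [IsProbabilityMeasure Q]
    (Θ₀ : Set Θ) (hΘ₀ : MeasurableSet Θ₀)
    (β : Θ → ℝ) (hβmeas : Measurable β)
    (hβ0 : ∀ θ, 0 ≤ β θ) (hβ1 : ∀ θ, β θ ≤ 1)
    (C R α τ : ℝ) (hC : 0 < C) (hR : 0 < R)
    (hα0 : 0 < α) (hα1 : α ≤ 1)
    (hτdef : τ = α * C / R)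
    (hvalid : ∀ θ ∈ Θ₀, β θ ≤ τ)
    (hparticipate : ∫ θ, β θ ∂Q ≥ C / R) :
    (∫ θ in Θ₀, β θ ∂Q) / (∫ θ, β θ ∂Q) ≤ α :=
  bayes_fdr_level_alpha_general Q Θ₀ hΘ₀ β C R α τ hC hR hα0 hτdef hvalid hparticipate
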